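/- Let (α,β) be an admissible pair such that α_2 = 1 and β_2 = 0 (so α begins 011 and β begins 100), and assume that α_3 = 1 or β_3 = 0. Then h(Ω_{(α,β)}) > 0; that is, (α,β) is non-null. -/

import Mathlib

open scoped Classical

/-- Infinite binary strings. -/
abbrev Omega : Type := ℕ → Bool

/-- The shift operator. -/
def shift (ω : Omega) : Omega := fun n => ω (n + 1)

/-- Strict lexicographic order on `Omega`. -/
def lexLt (σ ω : Omega) : Prop :=
  ∃ k : ℕ, (∀ i, i < k → σ i = ω i) ∧ σ k < ω k

/-- Non-strict lexicographic order on `Omega`. -/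
def lexLe (σ ω : Omega) : Prop := lexLt σ ω ∨ σ = ω

/-- An admissible pair of strings. -/
def Admissible (α β : Omega) : Prop :=
  α 0 = false ∧ α 1 = true ∧ β 0 = true ∧ β 1 = false ∧
  (∀ n : ℕ, ¬ (lexLt α (shift^[n] α) ∧ lexLe (shift^[n] α) β)) ∧
  (∀ n : ℕ, ¬ (lexLe α (shift^[n] β) ∧ lexLt (shift^[n] β) β))

/-- The address space `Ω_{(α,β,−)}`. -/
def OmegaMinus (α β : Omega) : Set Omega :=
  {ω | ∀ n : ℕ, ¬ (lexLt α (shift^[n] ω) ∧ lexLe (shift^[n] ω) β)}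

/-- The address space `Ω_{(α,β,+)}`. -/
def OmegaPlus (α β : Omega) : Set Omega :=
  {ω | ∀ n : ℕ, ¬ (lexLe α (shift^[n] ω) ∧ lexLt (shift^[n] ω) β)}

/-- The address space `Ω_{(α,β)}`. -/
def OmegaUnion (α β : Omega) : Set Omega := OmegaMinus α β ∪ OmegaPlus α β

/-- Length-`n` initial segments of the elements of `Γ`. -/
def initSegs (Γ : Set Omega) (n : ℕ) : Set (Fin n → Bool) :=
  (fun ω (i : Fin n) => ω i) '' Γ

/-- Exponential growth rate `h(Γ)`. -/
noncomputable def growth (Γ : Set Omega) : ℝ :=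
  Filter.limsup (fun n : ℕ => Real.log ((initSegs Γ n).ncard) / (n : ℝ)) Filter.atTop

/-- The projection map `π_x`. -/
noncomputable def proj (x : ℝ) (ω : Omega) : ℝ :=
  (1 - x) * ∑' k : ℕ, (if ω k then (1 : ℝ) else 0) * x ^ k

/-- The equation `Σ α_n x^n = Σ β_n x^n`. -/
def seriesEq (α β : Omega) (x : ℝ) : Prop :=
  (∑' n : ℕ, (if α n then (1 : ℝ) else 0) * x ^ n) =
    (∑' n : ℕ, (if β n then (1 : ℝ) else 0) * x ^ n)

/-- Solutions in `[1/2,1)` of `Σ α_n x^n = Σ β_n x^n`. -/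
def baseSet (α β : Omega) : Set ℝ :=
  {x : ℝ | x ∈ Set.Ico (1/2 : ℝ) 1 ∧ seriesEq α β x}

/-- A decimal: a two-sided binary string vanishing far to the left. -/
def IsDecimal (d : ℤ → Bool) : Prop := ∃ m : ℤ, ∀ j, j < m → d j = false

/-- Strict order on decimals. -/
def decLt (d e : ℤ → Bool) : Prop :=
  ∃ j : ℤ, (∀ i, i < j → d i = e i) ∧ d j < e j

/-- The set `Γ^•` of decimals obtained from strings in `Γ`. -/
def dot (Γ : Set Omega) : Set (ℤ → Bool) :=
  {d | ∃ m : ℤ, ∃ γ ∈ Γ, (∀ j, j < m → d j = false) ∧ ∀ i : ℕ, d (m + i) = γ i}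

/-- Prepend a `0` to a string. -/
def cons0 (ω : Omega) : Omega := fun n => match n with | 0 => false | k + 1 => ω k

/-- The space `Ω⁰_{(α,β,−)}`. -/
def Omega0Minus (α β : Omega) : Set Omega :=
  {ω ∈ OmegaMinus α β | lexLe (cons0 ω) α}

/-- The space `Ω⁰_{(α,β,+)}`. -/
def Omega0Plus (α β : Omega) : Set Omega :=
  {ω ∈ OmegaPlus α β | lexLt (cons0 ω) α}

/-- The address space of decimals `Ω^•_{(α,β,−)}`. -/
def dotMinus (α β : Omega) : Set (ℤ → Bool) := dot (Omega0Minus α β)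

/-- The address space of decimals `Ω^•_{(α,β,+)}`. -/
def dotPlus (α β : Omega) : Set (ℤ → Bool) := dot (Omega0Plus α β)

/-- The address space of decimals `Ω^•_{(α,β)}`. -/
def dotUnion (α β : Omega) : Set (ℤ → Bool) :=
  dot (Omega0Minus α β ∪ Omega0Plus α β)

/-- The radix map `d ↦ Σ_{j ∈ ℤ} d(j)·B^(−j)`. -/
noncomputable def radixVal (B : ℝ) (d : ℤ → Bool) : ℝ :=
  ∑' j : ℤ, (if d j then (1 : ℝ) else 0) * B ^ (-j)

/-- Shift invariance for a set of decimals. -/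
def ShiftInvariantDec (Γ : Set (ℤ → Bool)) : Prop :=
  ∀ d ∈ Γ, ∀ k m : ℤ,
    (fun j : ℤ => if m ≤ j then d (j + k) else false) ∈ Γ

/-!
Call a string *short-run* if its zeros are isolated and its ones come in runs of length at
most two. A string in `[α, β]` that starts with `0` agrees with `α = 0111…` up to index 3,
and one that starts with `1` agrees with `β = 100…` up to index 2; either way it is not
short-run. Since short-run strings are shift invariant, they all lie in `Ω_{(α,β,−)}` when
`α_3 = 1`. Complementing bits reverses the lexicographic order and exchanges the two cases, so
when `β_3 = 0` the complements of short-run strings lie in `Ω_{(α,β,−)}`. Free concatenations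
of the blocks `01011 = 01·011` and `01101 = 011·01` are short-run, which gives at least
`2 ^ ⌊n/5⌋` initial segments of length `n`, hence `h ≥ (ln 2)/10`.
-/

lemma shift_iterate_apply (ω : Omega) (n k : ℕ) : shift^[n] ω k = ω (n + k) := by
  induction n generalizing k with
  | zero => simp
  | succ n ih => rw [Function.iterate_succ_apply', shift, ih, Nat.add_right_comm]; rfl

lemma shift_iterate_compl (ω : Omega) (n : ℕ) : shift^[n] ωᶜ = (shift^[n] ω)ᶜ := by
  funext k; simp [shift_iterate_apply]

lemma lexLt.compl {σ ω : Omega} (h : lexLt σ ω) : lexLt ωᶜ σᶜ := by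
  obtain ⟨k, hagree, hk⟩ := h
  refine ⟨k, fun i hi => by simp [hagree i hi], ?_⟩
  revert hk; simp only [Pi.compl_apply]; cases σ k <;> cases ω k <;> decide

lemma lexLe.compl {σ ω : Omega} (h : lexLe σ ω) : lexLe ωᶜ σᶜ :=
  h.imp lexLt.compl (congrArg _ ·.symm)

lemma lexLe.eqOn_of_forall_false {α σ : Omega} {m : ℕ} (h : lexLe α σ)
    (hα : ∀ i < m, α i = false → σ i = false) : ∀ i < m, α i = σ i := by
  rcases h with ⟨k, hagree, hk⟩ | rfl
  · have hmk : m ≤ k := by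
      by_contra! hkm
      have := hα k hkm
      revert hk this; cases α k <;> cases σ k <;> decide
    exact fun i hi => hagree i (hi.trans_le hmk)
  · exact fun _ _ => rfl

lemma lexLe.eqOn_of_forall_true {σ β : Omega} {m : ℕ} (h : lexLe σ β)
    (hβ : ∀ i < m, β i = true → σ i = true) : ∀ i < m, σ i = β i := by
  intro i hi
  simpa using (h.compl.eqOn_of_forall_false (m := m) (by simpa using hβ) i hi).symm

def ShortRuns (ω : Omega) : Prop :=
  ∀ n, (ω n || ω (n + 1)) = true ∧ (ω n && ω (n + 1) && ω (n + 2)) = false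

lemma ShortRuns.iterate_shift {ω : Omega} (h : ShortRuns ω) (k : ℕ) :
    ShortRuns (shift^[k] ω) := by
  intro n
  simpa only [shift_iterate_apply, Nat.add_assoc] using h (k + n)

lemma not_lexLe_lexLe_of_shortRuns {α β σ : Omega}
    (hα1 : α 1 = true) (hα2 : α 2 = true) (hα3 : α 3 = true)
    (hβ1 : β 1 = false) (hβ2 : β 2 = false) (hσ : ShortRuns σ) :
    ¬ (lexLe α σ ∧ lexLe σ β) := by
  rintro ⟨hασ, hσβ⟩
  obtain ⟨h00, h111⟩ := hσ 1
  cases hσ0 : σ 0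
  · have hagree := hασ.eqOn_of_forall_false (m := 4) (by
      intro i hi; interval_cases i <;> simp_all)
    simp [← hagree 1 (by norm_num), ← hagree 2 (by norm_num), ← hagree 3 (by norm_num),
      hα1, hα2, hα3] at h111
  · have hagree := hσβ.eqOn_of_forall_true (m := 3) (by
      intro i hi; interval_cases i <;> simp_all)
    simp [hagree 1 (by norm_num), hagree 2 (by norm_num), hβ1, hβ2] at h00

lemma mem_OmegaMinus_of_shortRuns {α β ω : Omega}
    (hα1 : α 1 = true) (hα2 : α 2 = true) (hα3 : α 3 = true)
    (hβ1 : β 1 = false) (hβ2 : β 2 = false) (hω : ShortRuns ω) :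
    ω ∈ OmegaMinus α β := fun n ⟨hlt, hle⟩ =>
  not_lexLe_lexLe_of_shortRuns hα1 hα2 hα3 hβ1 hβ2 (hω.iterate_shift n) ⟨Or.inl hlt, hle⟩

lemma mem_OmegaMinus_of_shortRuns_compl {α β ω : Omega}
    (hα1 : α 1 = true) (hα2 : α 2 = true)
    (hβ1 : β 1 = false) (hβ2 : β 2 = false) (hβ3 : β 3 = false) (hω : ShortRuns ωᶜ) :
    ω ∈ OmegaMinus α β := fun n ⟨hlt, hle⟩ =>
  not_lexLe_lexLe_of_shortRuns (α := βᶜ) (β := αᶜ) (by simp [hβ1]) (by simp [hβ2])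
    (by simp [hβ3]) (by simp [hα1]) (by simp [hα2])
    (shift_iterate_compl ω n ▸ hω.iterate_shift n) ⟨hle.compl, lexLe.compl (Or.inl hlt)⟩

def codeBlock (b : Bool) : List Bool := [false, true, b, !b, true]

def blockCode (s : ℕ → Bool) : Omega := fun n => (codeBlock (s (n / 5))).getD (n % 5) false

lemma blockCode_apply_add (s : ℕ → Bool) (q : ℕ) {i : ℕ} (hi : i < 10) :
    blockCode s (5 * q + i) = (codeBlock (s q) ++ codeBlock (s (q + 1))).getD i false := by
  interval_cases i <;> simp [blockCode, codeBlock, Nat.add_div_of_dvd_right]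

lemma blockCode_apply_five_mul_add_two (s : ℕ → Bool) (q : ℕ) :
    blockCode s (5 * q + 2) = s q :=
  blockCode_apply_add s q (by norm_num)

lemma shortRuns_blockCode (s : ℕ → Bool) : ShortRuns (blockCode s) := by
  intro n
  obtain ⟨q, i, hi, rfl⟩ : ∃ q i, i < 5 ∧ n = 5 * q + i :=
    ⟨n / 5, n % 5, Nat.mod_lt _ (by norm_num), (Nat.div_add_mod n 5).symm⟩
  simp only [Nat.add_assoc, blockCode_apply_add s q (by omega : i < 10),
    blockCode_apply_add s q (by omega : i + 1 < 10),
    blockCode_apply_add s q (by omega : i + 2 < 10)]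
  generalize s q = b, s (q + 1) = b'
  revert i b b'; decide

lemma two_pow_le_ncard_initSegs {Γ : Set Omega} {L r : ℕ} (hr : r < L)
    (H : (ℕ → Bool) → Omega) (hΓ : ∀ s, H s ∈ Γ) (hH : ∀ s q, H s (L * q + r) = s q)
    (n : ℕ) : 2 ^ (n / L) ≤ (initSegs Γ n).ncard := by
  have hpos : ∀ q < n / L, L * q + r < n := fun q hq =>
    calc L * q + r < L * (q + 1) := by rw [Nat.mul_succ]; omega
      _ ≤ L * (n / L) := Nat.mul_le_mul_left L hq
      _ ≤ n := Nat.mul_div_le n L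
  let read (w : Fin n → Bool) (q : Fin (n / L)) : Bool := w ⟨L * q + r, hpos q q.2⟩
  have hread : read '' initSegs Γ n = Set.univ := by
    refine Set.eq_univ_of_forall fun t => ?_
    let s (q : ℕ) : Bool := if hq : q < n / L then t ⟨q, hq⟩ else false
    refine ⟨fun i => H s i, ⟨H s, hΓ s, rfl⟩, funext fun q => ?_⟩
    simp [read, s, hH]
  calc 2 ^ (n / L) = (Set.univ : Set (Fin (n / L) → Bool)).ncard := by simp
    _ = (read '' initSegs Γ n).ncard := by rw [hread]
    _ ≤ (initSegs Γ n).ncard := Set.ncard_image_le (Set.toFinite _)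

lemma log_ncard_initSegs_div_le (Γ : Set Omega) (n : ℕ) :
    Real.log (initSegs Γ n).ncard / n ≤ Real.log 2 := by
  rcases (initSegs Γ n).eq_empty_or_nonempty with hΓ | hΓ
  · simp [hΓ, Real.log_nonneg]
  rcases Nat.eq_zero_or_pos n with rfl | hn
  · simp [Real.log_nonneg]
  have hcard : (initSegs Γ n).ncard ≤ 2 ^ n := by
    simpa [Set.ncard_univ] using Set.ncard_le_ncard (Set.subset_univ (initSegs Γ n))
  rw [div_le_iff₀ (by positivity), mul_comm, ← Real.log_pow]
  exact Real.log_le_log (by exact_mod_cast (Set.ncard_pos (Set.toFinite _)).2 hΓ)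
    (by exact_mod_cast hcard)

lemma growth_pos_of_two_pow_le {Γ : Set Omega} {L : ℕ} (hL : 0 < L)
    (h : ∀ n, 2 ^ (n / L) ≤ (initSegs Γ n).ncard) : 0 < growth Γ := by
  have hbdd : Filter.IsBoundedUnder (· ≤ ·) Filter.atTop
      (fun n : ℕ => Real.log (initSegs Γ n).ncard / n) :=
    Filter.isBoundedUnder_of ⟨Real.log 2, log_ncard_initSegs_div_le Γ⟩
  have hlower : ∀ n ≥ L, Real.log 2 / (2 * L) ≤ Real.log (initSegs Γ n).ncard / n := by
    intro n hn
    have hq : 1 ≤ n / L := (Nat.one_le_div_iff hL).2 hn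
    have hn2 : (n : ℝ) ≤ 2 * L * (n / L : ℕ) := by
      have := Nat.lt_mul_div_succ n hL
      exact_mod_cast (by nlinarith : n ≤ 2 * L * (n / L))
    have hlog : (n / L : ℕ) * Real.log 2 ≤ Real.log (initSegs Γ n).ncard := by
      rw [← Real.log_pow]
      exact Real.log_le_log (by positivity) (by exact_mod_cast h n)
    rw [div_le_div_iff₀ (by positivity) (by exact_mod_cast hL.trans_le hn)]
    nlinarith [Real.log_pos one_lt_two]
  calc 0 < Real.log 2 / (2 * L) := by have := Real.log_pos one_lt_two; positivity
    _ ≤ growth Γ := Filter.le_limsup_of_frequently_le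
        (Filter.eventually_atTop.2 ⟨L, hlower⟩).frequently hbdd

lemma growth_pos_of_shortRuns_subset {Γ : Set Omega} (hΓ : {ω | ShortRuns ω} ⊆ Γ) :
    0 < growth Γ :=
  growth_pos_of_two_pow_le (L := 5) (by norm_num) <|
    two_pow_le_ncard_initSegs (r := 2) (by norm_num) blockCode
      (fun s => hΓ (shortRuns_blockCode s)) blockCode_apply_five_mul_add_two

lemma growth_pos_of_shortRuns_compl_subset {Γ : Set Omega} (hΓ : {ω | ShortRuns ωᶜ} ⊆ Γ) :
    0 < growth Γ :=
  growth_pos_of_two_pow_le (L := 5) (by norm_num) <|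
    two_pow_le_ncard_initSegs (r := 2) (by norm_num) (fun s => (blockCode sᶜ)ᶜ)
      (fun s => hΓ (by simpa using shortRuns_blockCode sᶜ))
      (by simp [blockCode_apply_five_mul_add_two])

/-- If `(α,β)` is an admissible pair with `α` beginning `011` and `β`
beginning `100`, and moreover `α_3 = 1` or `β_3 = 0`, then `h(Ω_{(α,β)}) > 0`, i.e.
`(α,β)` is non-null. -/
theorem stmt_7 (α β : Omega) (hadm : Admissible α β)
    (hα2 : α 2 = true) (hβ2 : β 2 = false)
    (h3 : α 3 = true ∨ β 3 = false) :
    0 < growth (OmegaUnion α β) := by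
  obtain ⟨-, hα1, -, hβ1, -, -⟩ := hadm
  have hsub : OmegaMinus α β ⊆ OmegaUnion α β := Set.subset_union_left
  rcases h3 with hα3 | hβ3
  · exact growth_pos_of_shortRuns_subset fun ω hω =>
      hsub (mem_OmegaMinus_of_shortRuns hα1 hα2 hα3 hβ1 hβ2 hω)
  · exact growth_pos_of_shortRuns_compl_subset fun ω hω =>
      hsub (mem_OmegaMinus_of_shortRuns_compl hα1 hα2 hβ1 hβ2 hβ3 hω)
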